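/- For every cut-free derivation D ⊲ Γ ⊢ M : B in IMLL₂ that contains no instance of the rule ∀L, the following inequalities hold: |M| ≤ |M^Γ_B| ≤ |Γ⁻| + |B⁻| ≤ 2·|M^Γ_B|, where M^Γ_B is the η-long normal form of M obtained by η-expanding D. -/

import Mathlib

/-!
Core development: untyped λ-terms in de Bruijn representation, linearity,
β- and η-reduction, as in the paper "A type-assignment of linear erasure
and duplication" (Curzi, Roversi).
-/

namespace LEMPaper

/-- Untyped λ-terms, de Bruijn representation. -/
inductive Lam : Type
  | var : ℕ → Lam
  | app : Lam → Lam → Lam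
  | lam : Lam → Lam
  deriving DecidableEq

namespace Lam

/-- Lift a renaming under a binder. -/
def liftRen (ρ : ℕ → ℕ) : ℕ → ℕ
  | 0 => 0
  | n + 1 => ρ n + 1

/-- Apply a renaming of free variables. -/
def rename (ρ : ℕ → ℕ) : Lam → Lam
  | var n => var (ρ n)
  | app M N => app (M.rename ρ) (N.rename ρ)
  | lam M => lam (M.rename (liftRen ρ))

/-- Shift all free variables up by one. -/
def shift (M : Lam) : Lam := M.rename Nat.succ

/-- Lift a simultaneous substitution under a binder. -/
def liftSub (s : ℕ → Lam) : ℕ → Lam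
  | 0 => var 0
  | n + 1 => (s n).shift

/-- Simultaneous (capture-avoiding) substitution. -/
def substAll (s : ℕ → Lam) : Lam → Lam
  | var n => s n
  | app M N => app (M.substAll s) (N.substAll s)
  | lam M => lam (M.substAll (liftSub s))

/-- Capture-avoiding substitution `M[N/n]`; the variables above `n` are decremented. -/
def subst (M : Lam) (n : ℕ) (N : Lam) : Lam :=
  M.substAll (fun m => if m < n then var m else if m = n then N else var (m - 1))

/-- Number of (free) occurrences of the variable `n` in a term. -/
def countFree : Lam → ℕ → ℕ
  | var m, n => if m = n then 1 else 0
  | app M N, n => M.countFree n + N.countFree n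
  | lam M, n => M.countFree (n + 1)

/-- A term is closed when it has no free variables. -/
def Closed (M : Lam) : Prop := ∀ n, M.countFree n = 0

/-- A λ-term is linear if all of its free variables occur exactly once in it and
every abstraction binds a variable occurring exactly once in its (linear) body. -/
def Linear : Lam → Prop
  | var _ => True
  | app M N => M.Linear ∧ N.Linear ∧ ∀ n, M.countFree n = 0 ∨ N.countFree n = 0
  | lam M => M.Linear ∧ M.countFree 0 = 1

/-- The identity combinator `I = λx.x`. -/
def I : Lam := lam (var 0)

/-- The linear pairing `⟨M,N⟩ = λz. z M N`. -/
def pair (M N : Lam) : Lam := lam (app (app (var 0) M.shift) N.shift)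

/-- The size (number of nodes of the syntax tree) of a term. -/
def size : Lam → ℕ
  | var _ => 1
  | app M N => M.size + N.size + 1
  | lam M => M.size + 1

/-- One-step β-reduction, closed under arbitrary contexts. -/
inductive Beta : Lam → Lam → Prop
  | beta (M N : Lam) : Beta (app (lam M) N) (M.subst 0 N)
  | appL {M M'} (N : Lam) : Beta M M' → Beta (app M N) (app M' N)
  | appR (M : Lam) {N N'} : Beta N N' → Beta (app M N) (app M N')
  | lam {M M'} : Beta M M' → Beta (lam M) (lam M')

/-- One-step η-reduction `λx.Mx →η M` (x not free in M), closed under contexts. -/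
inductive Eta : Lam → Lam → Prop
  | eta (M : Lam) : Eta (lam (app M.shift (var 0))) M
  | appL {M M'} (N : Lam) : Eta M M' → Eta (app M N) (app M' N)
  | appR (M : Lam) {N N'} : Eta N N' → Eta (app M N) (app M N')
  | lam {M M'} : Eta M M' → Eta (lam M) (lam M')

/-- One-step βη-reduction. -/
def BetaEta (M N : Lam) : Prop := Beta M N ∨ Eta M N

/-- A value is a closed linear λ-term in β-normal form. -/
def IsValue (V : Lam) : Prop := V.Linear ∧ V.Closed ∧ ∀ W, ¬ Beta V W

end Lam

end LEMPaper

namespace LEMPaper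

/-- Types of second-order intuitionistic multiplicative linear logic `IMLL₂`:
`A ::= α | A ⊸ B | ∀α.A` (type variables in de Bruijn representation). -/
inductive Ty : Type
  | var : ℕ → Ty
  | arr : Ty → Ty → Ty
  | all : Ty → Ty
  deriving DecidableEq

namespace Ty

def liftRen (ρ : ℕ → ℕ) : ℕ → ℕ
  | 0 => 0
  | n + 1 => ρ n + 1

def rename (ρ : ℕ → ℕ) : Ty → Ty
  | var n => var (ρ n)
  | arr A B => arr (A.rename ρ) (B.rename ρ)
  | all A => all (A.rename (liftRen ρ))

/-- Shift all free type variables up by one. -/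
def shift (A : Ty) : Ty := A.rename Nat.succ

def liftSub (s : ℕ → Ty) : ℕ → Ty
  | 0 => var 0
  | n + 1 => (s n).shift

def substAll (s : ℕ → Ty) : Ty → Ty
  | var n => s n
  | arr A B => arr (A.substAll s) (B.substAll s)
  | all A => all (A.substAll (liftSub s))

/-- `A.instTop B` instantiates the outermost bound type variable of `A` with `B`
(i.e. `A⟨B/α⟩` where `α` is the variable bound by an enclosing `∀`). -/
def instTop (A B : Ty) : Ty :=
  A.substAll (fun n => match n with | 0 => B | m + 1 => var m)

/-- All free type variables are `< d`. -/
def ClosedAt : Ty → ℕ → Prop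
  | var n, d => n < d
  | arr A B, d => A.ClosedAt d ∧ B.ClosedAt d
  | all A, d => A.ClosedAt (d + 1)

/-- A type is closed when it has no free type variables. -/
def Closed (A : Ty) : Prop := A.ClosedAt 0

/-- `isPiSigma A true` means `A` is a `Π₁`-type, `isPiSigma A false` that `A` is a
`Σ₁`-type, following the mutual grammar
`Π₁ ::= α | Σ₁ ⊸ Π₁ | ∀α.Π₁` and `Σ₁ ::= α | Π₁ ⊸ Σ₁`. -/
def isPiSigma : Ty → Bool → Prop
  | var _, _ => True
  | arr A B, b => A.isPiSigma (!b) ∧ B.isPiSigma b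
  | all A, b => b = true ∧ A.isPiSigma true

/-- A ground type is a closed `Π₁`-type. -/
def Ground (A : Ty) : Prop := A.isPiSigma true ∧ A.Closed

/-- The unity type `1 = ∀α.(α ⊸ α)`. -/
def one : Ty := all (arr (var 0) (var 0))

/-- The tensor product `A ⊗ B = ∀α.(A ⊸ B ⊸ α) ⊸ α`. -/
def tensor (A B : Ty) : Ty :=
  all (arr (arr A.shift (arr B.shift (var 0))) (var 0))

end Ty

/-- Typing contexts for the linear λ-calculus: position `i` records the type of the
de Bruijn variable `i` (`none` meaning that the variable is not available). -/
abbrev Ctx := List (Option Ty)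

/-- Splitting of a linear context into two disjoint parts. -/
inductive Split : Ctx → Ctx → Ctx → Prop
  | nil : Split [] [] []
  | left {Γ Γ₁ Γ₂ A} : Split Γ Γ₁ Γ₂ → Split (some A :: Γ) (some A :: Γ₁) (none :: Γ₂)
  | right {Γ Γ₁ Γ₂ A} : Split Γ Γ₁ Γ₂ → Split (some A :: Γ) (none :: Γ₁) (some A :: Γ₂)
  | skip {Γ Γ₁ Γ₂} : Split Γ Γ₁ Γ₂ → Split (none :: Γ) (none :: Γ₁) (none :: Γ₂)

/-- The context contains exactly one (available) assumption, of type `A`, at `n`. -/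
def OnlyAt (Γ : Ctx) (n : ℕ) (A : Ty) : Prop :=
  Γ[n]? = some (some A) ∧ ∀ m, m ≠ n → ∀ B, Γ[m]? ≠ some (some B)

/-- Type assignment of `IMLL₂` for the linear λ-calculus: variables are used exactly
once (ax and the context splitting of the application rule enforce linearity),
plus the second-order rules for `∀` (with the usual eigenvariable condition,
rendered by shifting the context in `allI`). -/
inductive HasTy : Ctx → Lam → Ty → Prop
  | var {Γ n A} : OnlyAt Γ n A → HasTy Γ (.var n) A
  | lam {Γ M A B} : HasTy (some A :: Γ) M B → HasTy Γ (.lam M) (A.arr B)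
  | app {Γ Γ₁ Γ₂ M N A B} : Split Γ Γ₁ Γ₂ →
      HasTy Γ₁ M (A.arr B) → HasTy Γ₂ N A → HasTy Γ (.app M N) B
  | allI {Γ M A} : HasTy (Γ.map (Option.map Ty.shift)) M A → HasTy Γ M (.all A)
  | allE {Γ M A} (B : Ty) : HasTy Γ M (.all A) → HasTy Γ M (A.instTop B)

end LEMPaper

namespace LEMPaper

/-- The renaming swapping the de Bruijn variables `k` and `k+1`. -/
def swapVar (k : ℕ) (n : ℕ) : ℕ :=
  if n = k then k + 1 else if n = k + 1 then k else n

/-- Term produced by the `cut` rule: substitute `N` (whose variables point into the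
first `g` positions) for the variable `0` of `M`, re-addressing the other
variables of `M` past the `g` positions occupied by the left context. -/
def cutTm (g : ℕ) (N M : Lam) : Lam :=
  M.substAll (fun n => match n with
    | 0 => N
    | m + 1 => .var (g + m))

/-- Term produced by the `⊸L` rule: `M[yN/x]`, where the new variable `y` sits at
position `0`, the left context occupies positions `1..g` and the right context the
following positions. -/
def arrLTm (g : ℕ) (N M : Lam) : Lam :=
  M.substAll (fun n => match n with
    | 0 => .app (.var 0) N.shift
    | m + 1 => .var (g + 1 + m))

/-- Sequent-calculus derivations of `IMLL₂` (Figure 1 of the paper), with contexts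
as lists (the implicit exchange of multiset contexts is rendered by the
size-irrelevant structural rule `exch`). -/
inductive SDer : List Ty → Lam → Ty → Type
  | ax (A : Ty) : SDer [A] (.var 0) A
  | exch (Γ₁ : List Ty) {A B : Ty} {Γ₂ : List Ty} {M : Lam} {C : Ty} :
      SDer (Γ₁ ++ A :: B :: Γ₂) M C →
      SDer (Γ₁ ++ B :: A :: Γ₂) (M.rename (swapVar Γ₁.length)) C
  | cut (Γ : List Ty) {Δ : List Ty} {N M : Lam} {A C : Ty} :
      SDer Γ N A → SDer (A :: Δ) M C →
      SDer (Γ ++ Δ) (cutTm Γ.length N M) C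
  | arrR {Γ : List Ty} {M : Lam} {A B : Ty} :
      SDer (A :: Γ) M B → SDer Γ (.lam M) (A.arr B)
  | arrL (Γ : List Ty) {Δ : List Ty} {N M : Lam} {A B C : Ty} :
      SDer Γ N A → SDer (B :: Δ) M C →
      SDer ((A.arr B) :: (Γ ++ Δ)) (arrLTm Γ.length N M) C
  | allR {Γ : List Ty} {M : Lam} {A : Ty} :
      SDer (Γ.map Ty.shift) M A → SDer Γ M (.all A)
  | allL {Γ : List Ty} {M : Lam} {A C : Ty} (B : Ty) :
      SDer ((A.instTop B) :: Γ) M C → SDer ((.all A) :: Γ) M C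

namespace SDer

/-- A derivation is cut-free when it contains no instance of the `cut` rule. -/
def cutFree : ∀ {Γ M A}, SDer Γ M A → Prop
  | _, _, _, .ax _ => True
  | _, _, _, .exch _ D => D.cutFree
  | _, _, _, .cut _ _ _ => False
  | _, _, _, .arrR D => D.cutFree
  | _, _, _, .arrL _ D₁ D₂ => D₁.cutFree ∧ D₂.cutFree
  | _, _, _, .allR D => D.cutFree
  | _, _, _, .allL _ D => D.cutFree

/-- A derivation contains no instance of the `∀L` rule. -/
def noForallL : ∀ {Γ M A}, SDer Γ M A → Prop
  | _, _, _, .ax _ => True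
  | _, _, _, .exch _ D => D.noForallL
  | _, _, _, .cut _ D₁ D₂ => D₁.noForallL ∧ D₂.noForallL
  | _, _, _, .arrR D => D.noForallL
  | _, _, _, .arrL _ D₁ D₂ => D₁.noForallL ∧ D₂.noForallL
  | _, _, _, .allR D => D.noForallL
  | _, _, _, .allL _ _ => False

end SDer

/-- The η-expansion of the variable term `x` at type `A` (Lemma A.1):
`x^α_α = x`, `x^{∀α.B}_{∀α.B} = x^B_B`, `x^{B⊸C}_{B⊸C} = λy.(x y^B_B)^C_C`. -/
def etaExpVar : Ty → Lam → Lam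
  | .var _, x => x
  | .all B, x => etaExpVar B x
  | .arr B C, x => .lam (etaExpVar C (.app x.shift (etaExpVar B (.var 0))))

/-- The subject `M^Γ_B` of the η-expansion of a derivation `D ⊲ Γ ⊢ M : B`
(Definition A.1): every axiom `x : A ⊢ x : A` is replaced by the canonical
derivation of `x : A ⊢ x^A_A : A` whose axioms are all atomic. -/
def SDer.etaTerm : ∀ {Γ M A}, SDer Γ M A → Lam
  | _, _, _, .ax A => etaExpVar A (.var 0)
  | _, _, _, .exch Γ₁ D => D.etaTerm.rename (swapVar Γ₁.length)
  | _, _, _, .cut Γ D₁ D₂ => cutTm Γ.length D₁.etaTerm D₂.etaTerm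
  | _, _, _, .arrR D => .lam D.etaTerm
  | _, _, _, .arrL Γ D₁ D₂ => arrLTm Γ.length D₁.etaTerm D₂.etaTerm
  | _, _, _, .allR D => D.etaTerm
  | _, _, _, .allL _ D => D.etaTerm

/-- `|A⁻|`: the size of the type obtained from `A` by stripping away all the
universal quantifiers (`α⁻ = α`, `(A⊸B)⁻ = A⁻⊸B⁻`, `(∀α.A)⁻ = A⁻⟨γ/α⟩`). -/
def Ty.minusSize : Ty → ℕ
  | .var _ => 1
  | .arr A B => A.minusSize + B.minusSize + 1
  | .all A => A.minusSize

/-!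
Induction on the derivation. An axiom `x : A ⊢ x : A` has sequent size `2|A⁻|` and
η-expanded term `x^A_A` of size between `|A⁻|` and `2|A⁻| - 1`. Every other rule adds as
many nodes to the η-expanded term as to the sequent (counting all premises): `⊸R` and `⊸L`
one, `∀R` none. For `⊸L` this is `|M[yN/x]| = |M| + |N| + 1`, which rests on linearity:
the premise uses `x` exactly once. The two outer inequalities survive `cut` and `∀L`; the
middle one does not, since a cut formula is counted twice and an instance `A⟨B/α⟩` may be
larger than `∀α.A`.
-/

theorem sum_range_ite_add_eq (a d n : ℕ) :
    (∑ m ∈ Finset.range d, if a + m = n then 1 else 0) = if a ≤ n ∧ n < a + d then 1 else 0 := by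
  induction d with
  | zero => simp
  | succ d ih => rw [Finset.sum_range_succ, ih]; split_ifs <;> omega

theorem swapVar_involutive (k : ℕ) : Function.Involutive (swapVar k) := fun n => by
  unfold swapVar; split_ifs <;> omega

namespace Lam

theorem size_rename (M : Lam) (ρ : ℕ → ℕ) : (M.rename ρ).size = M.size := by
  induction M generalizing ρ <;> simp [rename, size, *]

theorem size_shift (M : Lam) : M.shift.size = M.size := size_rename M _

theorem liftRen_injective {ρ : ℕ → ℕ} (hρ : Function.Injective ρ) :
    Function.Injective (liftRen ρ) := by
  rintro (_ | a) (_ | b) h <;> simp_all [liftRen, hρ.eq_iff]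

theorem countFree_rename_apply {ρ : ℕ → ℕ} (hρ : Function.Injective ρ) (M : Lam) (n : ℕ) :
    (M.rename ρ).countFree (ρ n) = M.countFree n := by
  induction M generalizing ρ n with
  | var m => simp [rename, countFree, hρ.eq_iff]
  | app M N ihM ihN => simp [rename, countFree, ihM hρ, ihN hρ]
  | lam M ih => exact ih (liftRen_injective hρ) (n + 1)

theorem countFree_rename_of_notMem_range {ρ : ℕ → ℕ} {n : ℕ} (hn : n ∉ Set.range ρ)
    (M : Lam) : (M.rename ρ).countFree n = 0 := by
  induction M generalizing ρ n with
  | var m => simpa [rename, countFree] using fun h => hn ⟨m, h⟩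
  | app M N ihM ihN => simp [rename, countFree, ihM hn, ihN hn]
  | lam M ih =>
    refine ih ?_
    rintro ⟨_ | m, hm⟩
    · simp [liftRen] at hm
    · exact hn ⟨m, by simpa [liftRen] using hm⟩

theorem countFree_rename_of_involutive {ρ : ℕ → ℕ} (hρ : Function.Involutive ρ) (M : Lam)
    (n : ℕ) : (M.rename ρ).countFree n = M.countFree (ρ n) := by
  conv_lhs => rw [← hρ n]
  exact countFree_rename_apply hρ.injective M (ρ n)

theorem countFree_shift_succ (M : Lam) (n : ℕ) : M.shift.countFree (n + 1) = M.countFree n :=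
  countFree_rename_apply Nat.succ_injective M n

theorem countFree_shift_zero (M : Lam) : M.shift.countFree 0 = 0 :=
  countFree_rename_of_notMem_range (by simp) M

theorem countFree_substAll (σ : ℕ → Lam) {M : Lam} {K : ℕ}
    (hK : ∀ m, K ≤ m → M.countFree m = 0) (n : ℕ) :
    (M.substAll σ).countFree n = ∑ m ∈ Finset.range K, M.countFree m * (σ m).countFree n := by
  induction M generalizing σ n K with
  | var j =>
    have hj : j < K := by
      by_contra h
      simpa [countFree] using hK j (by omega)
    rw [Finset.sum_eq_single_of_mem j (Finset.mem_range.2 hj)]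
    · simp [substAll, countFree]
    · intro m _ hm
      simp [countFree, Ne.symm hm]
  | app M N ihM ihN =>
    have hM : ∀ m, K ≤ m → M.countFree m = 0 := fun m hm => by
      have := hK m hm; simp only [countFree] at this; omega
    have hN : ∀ m, K ≤ m → N.countFree m = 0 := fun m hm => by
      have := hK m hm; simp only [countFree] at this; omega
    simp only [substAll, countFree, ihM σ hM, ihN σ hN, ← Finset.sum_add_distrib, add_mul]
  | lam M ih =>
    have hM : ∀ m, K + 1 ≤ m → M.countFree m = 0 := by
      rintro (_ | m) hm
      · omega
      · exact hK m (by omega)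
    simp only [substAll, countFree]
    rw [ih (liftSub σ) hM, Finset.sum_range_succ']
    simp [liftSub, countFree, countFree_shift_succ]

theorem size_substAll_add_countFree (M : Lam) (σ : ℕ → Lam) (k : ℕ)
    (hσ : ∀ m, m ≠ k → ∃ j, σ m = .var j) :
    (M.substAll σ).size + M.countFree k = M.size + M.countFree k * (σ k).size := by
  induction M generalizing σ k with
  | var j =>
    by_cases hj : j = k
    · subst hj; simp [substAll, countFree, size]; omega
    · obtain ⟨i, hi⟩ := hσ j hj
      simp [substAll, countFree, hj, hi, size]
  | app M N ihM ihN =>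
    have := ihM σ k hσ
    have := ihN σ k hσ
    simp only [substAll, countFree, size, add_mul]
    omega
  | lam M ih =>
    have hlift : ∀ m, m ≠ k + 1 → ∃ j, liftSub σ m = .var j := by
      rintro (_ | m) hm
      · exact ⟨0, rfl⟩
      · obtain ⟨j, hj⟩ := hσ m (by omega)
        exact ⟨j + 1, by simp [liftSub, hj, shift, rename]⟩
    have := ih (liftSub σ) (k + 1) hlift
    rw [show (liftSub σ (k + 1)).size = (σ k).size from size_shift _] at this
    simp only [substAll, countFree, size]
    omega

def UsesEachOnce (M : Lam) (k : ℕ) : Prop :=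
  ∀ n, M.countFree n = if n < k then 1 else 0

theorem UsesEachOnce.lam {M : Lam} {k : ℕ} (h : M.UsesEachOnce (k + 1)) :
    (Lam.lam M).UsesEachOnce k := by
  intro n
  simp only [countFree, h (n + 1)]
  split_ifs <;> omega

theorem UsesEachOnce.rename_swapVar {M : Lam} {j k : ℕ} (h : M.UsesEachOnce k)
    (hjk : j + 1 < k) : (M.rename (swapVar j)).UsesEachOnce k := by
  intro n
  rw [countFree_rename_of_involutive (swapVar_involutive j), h]
  unfold swapVar
  split_ifs <;> omega

theorem UsesEachOnce.app_var_zero_shift {N : Lam} {g : ℕ} (h : N.UsesEachOnce g) :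
    (Lam.app (.var 0) N.shift).UsesEachOnce (g + 1) := by
  rintro (_ | n)
  · simp [countFree, countFree_shift_zero]
  · simp only [countFree, countFree_shift_succ, h n, Nat.zero_ne_add_one, if_false]
    split_ifs <;> omega

theorem UsesEachOnce.countFree_eq_zero {M : Lam} {k : ℕ} (h : M.UsesEachOnce k) {n : ℕ}
    (hn : k ≤ n) : M.countFree n = 0 := by
  rw [h n, if_neg (by omega)]

theorem UsesEachOnce.cutTm {g d : ℕ} {N M : Lam} (hN : N.UsesEachOnce g)
    (hM : M.UsesEachOnce (d + 1)) : (LEMPaper.cutTm g N M).UsesEachOnce (g + d) := by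
  intro n
  rw [LEMPaper.cutTm, countFree_substAll _ (fun m => hM.countFree_eq_zero) n,
    Finset.sum_range_succ', hM 0, if_pos (Nat.succ_pos _), one_mul, hN n]
  have hsum : ∑ m ∈ Finset.range d, M.countFree (m + 1) * (Lam.var (g + m)).countFree n
      = ∑ m ∈ Finset.range d, if g + m = n then 1 else 0 :=
    Finset.sum_congr rfl fun m hm => by
      rw [hM, if_pos (by simpa using hm), one_mul]; rfl
  rw [hsum, sum_range_ite_add_eq]
  split_ifs <;> omega

theorem UsesEachOnce.countFree_zero {M : Lam} {k : ℕ} (h : M.UsesEachOnce (k + 1)) :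
    M.countFree 0 = 1 := by
  simp [h 0]

end Lam

open Lam

theorem arrLTm_eq_cutTm (g : ℕ) (N M : Lam) :
    arrLTm g N M = cutTm (g + 1) (.app (.var 0) N.shift) M := rfl

theorem size_cutTm {g : ℕ} {N M : Lam} (hM : M.countFree 0 = 1) :
    (cutTm g N M).size + 1 = M.size + N.size := by
  have := size_substAll_add_countFree M (fun n => match n with
    | 0 => N
    | m + 1 => .var (g + m)) 0 (by rintro (_ | m) h <;> simp_all)
  rw [hM, one_mul] at this
  exact this

theorem size_arrLTm {g : ℕ} {N M : Lam} (hM : M.countFree 0 = 1) :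
    (arrLTm g N M).size = M.size + N.size + 1 := by
  have := size_cutTm (g := g + 1) (N := .app (.var 0) N.shift) hM
  rw [arrLTm_eq_cutTm]
  simp only [size, size_shift] at this
  omega

namespace Ty

theorem minusSize_rename (A : Ty) (ρ : ℕ → ℕ) : (A.rename ρ).minusSize = A.minusSize := by
  induction A generalizing ρ <;> simp [rename, minusSize, *]

theorem minusSize_shift (A : Ty) : A.shift.minusSize = A.minusSize := minusSize_rename A _

theorem one_le_minusSize (A : Ty) : 1 ≤ A.minusSize := by
  induction A <;> simp only [minusSize] <;> omega

theorem minusSize_le_minusSize_substAll (A : Ty) (s : ℕ → Ty) :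
    A.minusSize ≤ (A.substAll s).minusSize := by
  induction A generalizing s with
  | var n => exact one_le_minusSize (s n)
  | arr A B ihA ihB => simpa [substAll, minusSize] using Nat.add_le_add (ihA s) (ihB s)
  | all A ih => exact ih (liftSub s)

theorem minusSize_all_le_minusSize_instTop (A B : Ty) :
    (all A).minusSize ≤ (A.instTop B).minusSize :=
  minusSize_le_minusSize_substAll A _

def etaExpSize : Ty → ℕ
  | .var _ => 0
  | .arr A B => A.etaExpSize + B.etaExpSize + 3
  | .all A => A.etaExpSize

theorem minusSize_le_etaExpSize_add_one (A : Ty) : A.minusSize ≤ A.etaExpSize + 1 := by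
  induction A <;> simp only [minusSize, etaExpSize] <;> omega

theorem etaExpSize_add_one_le_two_mul_minusSize (A : Ty) :
    A.etaExpSize + 1 ≤ 2 * A.minusSize := by
  induction A <;> simp only [minusSize, etaExpSize] <;> omega

end Ty

theorem size_etaExpVar (A : Ty) (x : Lam) : (etaExpVar A x).size = x.size + A.etaExpSize := by
  induction A generalizing x with
  | var => rfl
  | all A ih => exact ih x
  | arr B C ihB ihC =>
    simp only [etaExpVar, size, Ty.etaExpSize, ihC, ihB, size_shift]
    omega

theorem countFree_etaExpVar (A : Ty) (x : Lam) (n : ℕ) :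
    (etaExpVar A x).countFree n = x.countFree n := by
  induction A generalizing x n with
  | var => rfl
  | all A ih => exact ih x n
  | arr B C ihB ihC => simp [etaExpVar, countFree, ihC, ihB, countFree_shift_succ]

namespace SDer

theorem usesEachOnce {Γ : List Ty} {M : Lam} {B : Ty} (D : SDer Γ M B) :
    M.UsesEachOnce Γ.length := by
  induction D with
  | ax A => rintro (_ | n) <;> simp [countFree]
  | exch Γ₁ _ ih => simpa using ih.rename_swapVar (j := Γ₁.length) (by simp)
  | cut Γ _ _ ih₁ ih₂ => simpa using ih₁.cutTm ih₂
  | arrR _ ih => exact ih.lam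
  | arrL Γ _ _ ih₁ ih₂ =>
    rw [arrLTm_eq_cutTm]
    simpa [Nat.add_right_comm] using ih₁.app_var_zero_shift.cutTm ih₂
  | allR _ ih => simpa using ih
  | allL _ _ ih => simpa using ih

theorem usesEachOnce_etaTerm {Γ : List Ty} {M : Lam} {B : Ty} (D : SDer Γ M B) :
    D.etaTerm.UsesEachOnce Γ.length := by
  induction D with
  | ax A => rintro (_ | n) <;> simp [etaTerm, countFree_etaExpVar, countFree]
  | exch Γ₁ _ ih => simpa [etaTerm] using ih.rename_swapVar (j := Γ₁.length) (by simp)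
  | cut Γ _ _ ih₁ ih₂ => simpa [etaTerm] using ih₁.cutTm ih₂
  | arrR _ ih => exact ih.lam
  | arrL Γ _ _ ih₁ ih₂ =>
    rw [etaTerm, arrLTm_eq_cutTm]
    simpa [Nat.add_right_comm] using ih₁.app_var_zero_shift.cutTm ih₂
  | allR _ ih => simpa [etaTerm] using ih
  | allL _ _ ih => simpa [etaTerm] using ih

theorem size_le_size_etaTerm {Γ : List Ty} {M : Lam} {B : Ty} (D : SDer Γ M B) :
    M.size ≤ D.etaTerm.size := by
  induction D with
  | ax A => simp [etaTerm, size_etaExpVar, size]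
  | exch _ _ ih => simpa [etaTerm, size_rename] using ih
  | @cut Γ _ N _ _ _ D₁ D₂ ih₁ ih₂ =>
    have := size_cutTm (g := Γ.length) (N := N) D₂.usesEachOnce.countFree_zero
    have := size_cutTm (g := Γ.length) (N := D₁.etaTerm) D₂.usesEachOnce_etaTerm.countFree_zero
    simp only [etaTerm]
    omega
  | arrR _ ih => simpa [etaTerm, size] using ih
  | arrL _ D₁ D₂ ih₁ ih₂ =>
    simp only [etaTerm, size_arrLTm D₂.usesEachOnce.countFree_zero,
      size_arrLTm D₂.usesEachOnce_etaTerm.countFree_zero]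
    omega
  | allR _ ih => exact ih
  | allL _ _ ih => exact ih

theorem minusSize_le_two_mul_size_etaTerm {Γ : List Ty} {M : Lam} {B : Ty} (D : SDer Γ M B) :
    (Γ.map Ty.minusSize).sum + B.minusSize ≤ 2 * D.etaTerm.size := by
  induction D with
  | ax A =>
    have := A.minusSize_le_etaExpSize_add_one
    simp only [etaTerm, size_etaExpVar, size, List.map_singleton, List.sum_singleton]
    omega
  | exch _ _ ih =>
    simp only [etaTerm, size_rename, List.map_append, List.map_cons, List.sum_append,
      List.sum_cons] at ih ⊢
    omega
  | @cut Γ _ _ _ A _ D₁ D₂ ih₁ ih₂ =>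
    have := size_cutTm (g := Γ.length) (N := D₁.etaTerm) D₂.usesEachOnce_etaTerm.countFree_zero
    have := A.one_le_minusSize
    simp only [etaTerm, List.map_append, List.map_cons, List.sum_append, List.sum_cons] at ih₂ ⊢
    omega
  | arrR _ ih =>
    simp only [etaTerm, size, Ty.minusSize, List.map_cons, List.sum_cons] at ih ⊢
    omega
  | arrL _ D₁ D₂ ih₁ ih₂ =>
    simp only [etaTerm, size_arrLTm D₂.usesEachOnce_etaTerm.countFree_zero, Ty.minusSize,
      List.map_append, List.map_cons, List.sum_append, List.sum_cons] at ih₂ ⊢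
    omega
  | allR _ ih => simpa [etaTerm, Ty.minusSize, Function.comp_def, Ty.minusSize_shift] using ih
  | @allL _ _ A _ B _ ih =>
    have := Ty.minusSize_all_le_minusSize_instTop A B
    simp only [etaTerm, List.map_cons, List.sum_cons] at ih ⊢
    omega

theorem size_etaTerm_le {Γ : List Ty} {M : Lam} {B : Ty} (D : SDer Γ M B) (hcut : D.cutFree)
    (hall : D.noForallL) : D.etaTerm.size ≤ (Γ.map Ty.minusSize).sum + B.minusSize := by
  induction D with
  | ax A =>
    have := A.etaExpSize_add_one_le_two_mul_minusSize
    simp only [etaTerm, size_etaExpVar, size, List.map_singleton, List.sum_singleton]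
    omega
  | exch _ _ ih =>
    have := ih hcut hall
    simp only [etaTerm, size_rename, List.map_append, List.map_cons, List.sum_append,
      List.sum_cons] at this ⊢
    omega
  | cut => exact hcut.elim
  | arrR _ ih =>
    have := ih hcut hall
    simp only [etaTerm, size, Ty.minusSize, List.map_cons, List.sum_cons] at this ⊢
    omega
  | arrL _ D₁ D₂ ih₁ ih₂ =>
    have := ih₁ hcut.1 hall.1
    have := ih₂ hcut.2 hall.2
    simp only [etaTerm, size_arrLTm D₂.usesEachOnce_etaTerm.countFree_zero, Ty.minusSize,
      List.map_append, List.map_cons, List.sum_append, List.sum_cons] at this ⊢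
    omega
  | allR _ ih =>
    simpa [etaTerm, Ty.minusSize, Function.comp_def, Ty.minusSize_shift] using ih hcut hall
  | allL => exact hall.elim

end SDer

/-- Lemma 5.1: for every cut-free derivation `D ⊲ Γ ⊢ M : B` of
`IMLL₂` containing no instance of `∀L`,
`|M| ≤ |M^Γ_B| ≤ |Γ⁻| + |B⁻| ≤ 2·|M^Γ_B|`,
where `M^Γ_B` is the η-long normal form of `M` obtained by η-expanding `D`. -/
theorem size_bounds_of_cutFree_noForallL
    {Γ : List Ty} {M : Lam} {B : Ty} (D : SDer Γ M B)
    (hcut : D.cutFree) (hall : D.noForallL) :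
    M.size ≤ D.etaTerm.size ∧
    D.etaTerm.size ≤ (Γ.map Ty.minusSize).sum + B.minusSize ∧
    (Γ.map Ty.minusSize).sum + B.minusSize ≤ 2 * D.etaTerm.size :=
  ⟨D.size_le_size_etaTerm, D.size_etaTerm_le hcut hall, D.minusSize_le_two_mul_size_etaTerm⟩

end LEMPaper
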